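/- Convergence rate for approximate MD under relative smoothness: Let f be L-smooth and μ-strongly convex relative to Ψ with L > μ ≥ 0, (x̃_k) any sequence, and x_{k+1} = argmin_x{⟨x, ∇f(x̃_k)⟩ + L·B_Ψ(x, x̃_k)}. If the quantity L⟨∇Ψ(x_i) − ∇Ψ(x̃_i), x − x̃_i⟩ + ⟨∇f(x_i), x̃_i − x_i⟩ is bounded above by M for all 1 ≤ i ≤ k, then min_{1≤i≤k} f(x̃_i) − f(x) ≤ ((L−μ)/k)·B_Ψ(x, x̃₀) + M. -/

import Mathlib

/-! Optimality of the exact step `xs (i + 1)` from `xt i`, relative smoothness at `xt i` and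
relative strong convexity give `f (xs (i+1)) - f x ≤ (L - μ) B(x, xt i) - L B(x, xs (i+1))`.
Moving from `xs (i+1)` to `xt (i+1)` by relative smoothness and the three-point identity costs
exactly the error term bounded by `M`. As `μ ≥ 0` and `B ≥ 0` (forced by `μ < L`), these bounds
telescope, and the minimum is at most the average. -/

open RealInnerProductSpace Finset

variable {E : Type*} [NormedAddCommGroup E] [InnerProductSpace ℝ E] [CompleteSpace E]

noncomputable def bregman (Ψ : E → ℝ) (x y : E) : ℝ := Ψ x - Ψ y - ⟪gradient Ψ y, x - y⟫

def RelativelySmooth (f Ψ : E → ℝ) (L : ℝ) (s : Set E) : Prop :=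
  ∀ x ∈ s, ∀ y ∈ s, f y ≤ f x + ⟪gradient f x, y - x⟫ + L * bregman Ψ y x

def RelativelyStronglyConvex (f Ψ : E → ℝ) (μ : ℝ) (s : Set E) : Prop :=
  ∀ x ∈ s, ∀ y ∈ s, f y ≥ f x + ⟪gradient f x, y - x⟫ + μ * bregman Ψ y x

theorem bregman_three_point (Ψ : E → ℝ) (x y z : E) :
    bregman Ψ x y + bregman Ψ y z - bregman Ψ x z = ⟪gradient Ψ z - gradient Ψ y, x - y⟫ := by
  simp only [bregman, inner_sub_left, inner_sub_right]
  ring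

theorem hasFDerivAt_bregman_left {Ψ : E → ℝ} {x : E} (hΨ : DifferentiableAt ℝ Ψ x) (y : E) :
    HasFDerivAt (bregman Ψ · y) (innerSL ℝ (gradient Ψ x - gradient Ψ y)) x := by
  have hΨx : HasFDerivAt Ψ (innerSL ℝ (gradient Ψ x)) x := hΨ.hasGradientAt.hasFDerivAt
  have h := (hΨx.sub_const (Ψ y)).sub
    ((innerSL ℝ (gradient Ψ y)).hasFDerivAt.sub_const ⟪gradient Ψ y, y⟫)
  rw [← map_sub] at h
  refine h.congr_of_eventuallyEq (.of_forall fun z => ?_)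
  simp only [bregman, Pi.sub_apply, inner_sub_right, innerSL_apply_apply]

variable {f Ψ : E → ℝ} {L μ : ℝ} {s : Set E}

theorem RelativelySmooth.bregman_nonneg (hf : RelativelySmooth f Ψ L s)
    (hf' : RelativelyStronglyConvex f Ψ μ s) (hμL : μ < L) {x y : E} (hx : x ∈ s) (hy : y ∈ s) :
    0 ≤ bregman Ψ x y := by
  have := (hf y hy x hx).trans' (hf' y hy x hx)
  nlinarith

theorem IsMinOn.gradient_add_smul_sub_eq_zero {g y z : E}
    (hmin : IsMinOn (fun x => ⟪x, g⟫ + L * bregman Ψ x y) s z) (hz : z ∈ interior s)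
    (hΨ : DifferentiableAt ℝ Ψ z) :
    g + L • (gradient Ψ z - gradient Ψ y) = 0 := by
  have hderiv : HasFDerivAt (fun x => ⟪x, g⟫ + L * bregman Ψ x y)
      (innerSL ℝ (g + L • (gradient Ψ z - gradient Ψ y))) z := by
    have h := ((innerSL ℝ g).hasFDerivAt.add ((hasFDerivAt_bregman_left hΨ y).const_mul L))
    rw [← map_smul, ← map_add] at h
    refine h.congr_of_eventuallyEq (.of_forall fun x => ?_)
    simp only [Pi.add_apply, innerSL_apply_apply, real_inner_comm]
  have h0 := (hmin.isLocalMin (mem_interior_iff_mem_nhds.mp hz)).hasFDerivAt_eq_zero hderiv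
  rw [← inner_self_eq_zero (𝕜 := ℝ), ← innerSL_apply_apply, h0, zero_apply]

theorem RelativelySmooth.sub_le_of_mirror_step (hf : RelativelySmooth f Ψ L s)
    (hf' : RelativelyStronglyConvex f Ψ μ s) {x y z : E} (hx : x ∈ s) (hy : y ∈ s) (hz : z ∈ s)
    (hstep : gradient f y + L • (gradient Ψ z - gradient Ψ y) = 0) :
    f z - f x ≤ (L - μ) * bregman Ψ x y - L * bregman Ψ x z := by
  have hopt := congrArg (⟪·, x - z⟫) hstep
  simp only [inner_add_left, inner_smul_left, inner_zero_left, RCLike.conj_to_real] at hopt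
  have h3 := bregman_three_point Ψ x z y
  have hdir : ⟪gradient f y, z - y⟫ - ⟪gradient f y, x - y⟫ = -⟪gradient f y, x - z⟫ := by
    simp only [inner_sub_right]; ring
  have hL3 : L * (bregman Ψ x z + bregman Ψ z y - bregman Ψ x y)
      = -(L * ⟪gradient Ψ z - gradient Ψ y, x - z⟫) := by
    rw [h3, ← neg_sub, inner_neg_left, mul_neg]
  linarith [hf y hy z hz, hf' y hy x hx]

theorem RelativelySmooth.le_add_bregman_sub_bregman (hf : RelativelySmooth f Ψ L s)
    {x z t : E} (hz : z ∈ s) (ht : t ∈ s) :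
    f t ≤ f z + L * bregman Ψ x z - L * bregman Ψ x t
      + (L * ⟪gradient Ψ z - gradient Ψ t, x - t⟫ + ⟪gradient f z, t - z⟫) := by
  have h3 := bregman_three_point Ψ x t z
  linear_combination hf z hz t ht + L * h3

theorem sum_Icc_le_of_le_mul_sub {a b : ℕ → ℝ} {c M : ℝ} {k : ℕ}
    (h : ∀ i < k, a (i + 1) ≤ c * (b i - b (i + 1)) + M) :
    ∑ i ∈ Icc 1 k, a i ≤ c * (b 0 - b k) + k * M := by
  induction k with
  | zero => simp
  | succ k ih =>
    rw [sum_Icc_succ_top (Nat.le_add_left 1 k)]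
    have := ih fun i hi => h i (by omega)
    have := h k (by omega)
    push_cast
    linarith

theorem Finset.inf'_le_sum_div_card {ι α : Type*}
    [Field α] [LinearOrder α] [IsStrictOrderedRing α] (t : Finset ι) (ht : t.Nonempty) (a : ι → α) :
    t.inf' ht a ≤ (∑ i ∈ t, a i) / #t := by
  rw [le_div_iff₀ (by exact_mod_cast ht.card_pos), mul_comm, ← nsmul_eq_mul]
  exact card_nsmul_le_sum t a _ fun i hi => inf'_le a hi

theorem approximate_md_relative_smooth_rate {n : ℕ}
    (𝒳 : Set (EuclideanSpace ℝ (Fin n)))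
    (Ψ : EuclideanSpace ℝ (Fin n) → ℝ) (hΨdiff : Differentiable ℝ Ψ)
    (B : EuclideanSpace ℝ (Fin n) → EuclideanSpace ℝ (Fin n) → ℝ)
    (hB : ∀ x y, B x y = Ψ x - Ψ y - ⟪gradient Ψ y, x - y⟫)
    (f : EuclideanSpace ℝ (Fin n) → ℝ)
    (L μ : ℝ) (hμ : 0 ≤ μ) (hLμ : μ < L)
    (hsmooth : ∀ x ∈ 𝒳, ∀ y ∈ 𝒳,
      f y ≤ f x + ⟪gradient f x, y - x⟫ + L * B y x)
    (hrelstrong : ∀ x ∈ 𝒳, ∀ y ∈ 𝒳,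
      f y ≥ f x + ⟪gradient f x, y - x⟫ + μ * B y x)
    (xt xs : ℕ → EuclideanSpace ℝ (Fin n))
    (hxt : ∀ i, xt i ∈ 𝒳) (hxs : ∀ i, xs i ∈ interior 𝒳)
    (hiter : ∀ i, IsMinOn (fun x => ⟪x, gradient f (xt i)⟫ + L * B x (xt i)) 𝒳 (xs (i + 1)))
    (x : EuclideanSpace ℝ (Fin n)) (hx : x ∈ 𝒳)
    (k : ℕ) (hk : 1 ≤ k) (M : ℝ)
    (hM : ∀ i ∈ Finset.Icc 1 k,
      L * ⟪gradient Ψ (xs i) - gradient Ψ (xt i), x - xt i⟫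
        + ⟪gradient f (xs i), xt i - xs i⟫ ≤ M) :
    (Finset.Icc 1 k).inf' ⟨1, by simp [hk]⟩ (fun i => f (xt i) - f x)
      ≤ ((L - μ) / k) * B x (xt 0) + M := by
  obtain rfl : B = bregman Ψ := funext₂ hB
  have hBnn (i : ℕ) : 0 ≤ bregman Ψ x (xt i) :=
    RelativelySmooth.bregman_nonneg hsmooth hrelstrong hLμ hx (hxt i)
  have hstep (i : ℕ) (hi : i < k) :
      f (xt (i + 1)) - f x ≤ (L - μ) * (bregman Ψ x (xt i) - bregman Ψ x (xt (i + 1))) + M := by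
    have hxs' : xs (i + 1) ∈ 𝒳 := interior_subset (hxs _)
    have hdescent := RelativelySmooth.sub_le_of_mirror_step hsmooth hrelstrong hx (hxt i) hxs'
      ((hiter i).gradient_add_smul_sub_eq_zero (hxs _) (hΨdiff _))
    have hperturb :=
      RelativelySmooth.le_add_bregman_sub_bregman (x := x) hsmooth hxs' (hxt (i + 1))
    have herror := hM (i + 1) (mem_Icc.mpr ⟨by omega, by omega⟩)
    linarith [mul_nonneg hμ (hBnn (i + 1))]
  calc _ ≤ (∑ i ∈ Icc 1 k, (f (xt i) - f x)) / k := by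
        simpa using Finset.inf'_le_sum_div_card (Icc 1 k) _ (fun i => f (xt i) - f x)
    _ ≤ ((L - μ) * bregman Ψ x (xt 0) + k * M) / k := by
        gcongr
        linarith [sum_Icc_le_of_le_mul_sub (a := fun i => f (xt i) - f x)
          (b := fun i => bregman Ψ x (xt i)) hstep, mul_nonneg (sub_nonneg.2 hLμ.le) (hBnn k)]
    _ = ((L - μ) / k) * bregman Ψ x (xt 0) + M := by field_simp
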